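/- arXiv:0909.0151 — 2 statements merged into one kernel-verified Lean document; each statement's English description precedes it below -/
import Mathlib

section
/- Let $r \le N$ and let $Q$ be a homogeneous polynomial of degree $r$ in the variables $x_1,\dots,x_N$ over $\mathbb{C}$ that vanishes with multiplicity at least $r-1$ at every standard basis vector of $\mathbb{C}^N$. Then for every subset $S \subseteq \{1,\dots,N\}$ of cardinality $r$, the polynomial obtained from $Q$ by substituting $x_j = 0$ for all $j \notin S$ is a scalar multiple of the monomial $\prod_{i \in S} x_i$. -/
/-!
For `Q` homogeneous of degree `r` and a list `L` of `k` variables, the iterated derivative `∂_L Q`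
is homogeneous of degree `r - k`, so its value at the basis vector `e_j` is its coefficient of
`x_j^(r-k)`, a nonzero integer multiple of the coefficient of `x_j^(r-k) · x^L` in `Q`. Vanishing
to order `r - 1` at every `e_j` therefore kills each monomial of `Q` in which some variable occurs
at least twice. Setting `x_j = 0` for `j ∉ S` kills the monomials not supported in `S`, and the
only squarefree monomial of degree `r = #S` supported in `S` is `∏_{i ∈ S} x_i`.
-/

/-- A polynomial `Q ∈ ℂ[x_1, …, x_N]` vanishes with multiplicity at least `y` at a
point `p ∈ ℂ^N` if every iterated partial derivative of `Q` of total order at most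
`y - 1` (equivalently, of total order `< y`) evaluates to `0` at `p`. -/
def VanishesToOrder {σ : Type*} (Q : MvPolynomial σ ℂ) (p : σ → ℂ) (y : ℕ) : Prop :=
  ∀ L : List σ, L.length < y →
    MvPolynomial.eval p (L.foldr (fun i q => MvPolynomial.pderiv i q) Q) = 0

open Finsupp

theorem Finsupp.apply_add_degree_erase {σ : Type*} (m : σ →₀ ℕ) (j : σ) :
    m j + (m.erase j).degree = m.degree := by
  rw [← degree_single j (m j), ← map_add, single_add_erase]

namespace MvPolynomial

variable {R σ : Type*} [CommSemiring R]

theorem IsHomogeneous.foldr_pderiv {φ : MvPolynomial σ R} {n : ℕ} (h : φ.IsHomogeneous n)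
    (L : List σ) : (L.foldr (fun i q => pderiv i q) φ).IsHomogeneous (n - L.length) := by
  induction L with
  | nil => simpa using h
  | cons i L ih =>
    rw [List.foldr_cons, List.length_cons, ← Nat.sub_sub]
    exact ih.pderiv

theorem coeff_foldr_pderiv [DecidableEq σ] (L : List σ) (φ : MvPolynomial σ R) (m : σ →₀ ℕ) :
    ∃ c : ℕ, 0 < c ∧
      coeff m (L.foldr (fun i q => pderiv i q) φ) = coeff (m + Multiset.toFinsupp ↑L) φ * c := by
  induction L generalizing m with
  | nil => exact ⟨1, one_pos, by simp⟩
  | cons i L ih =>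
    obtain ⟨c, hc, hcoeff⟩ := ih (m + single i 1)
    refine ⟨c * (m i + 1), by positivity, ?_⟩
    rw [List.foldr_cons, coeff_pderiv, hcoeff, ← Multiset.cons_coe, ← Multiset.singleton_add,
      Multiset.toFinsupp_add, Multiset.toFinsupp_singleton, add_assoc]
    push_cast
    ring

theorem IsHomogeneous.degree_eq_of_coeff_ne_zero {φ : MvPolynomial σ R} {n : ℕ}
    (h : φ.IsHomogeneous n) {d : σ →₀ ℕ} (hd : coeff d φ ≠ 0) : d.degree = n := by
  rw [degree_eq_weight_one]
  exact h hd

theorem IsHomogeneous.eval_piSingle_one [DecidableEq σ] {φ : MvPolynomial σ R} {n : ℕ}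
    (h : φ.IsHomogeneous n) (j : σ) : eval (Pi.single j 1) φ = coeff (single j n) φ := by
  rw [eval_eq, Finset.sum_eq_single (single j n)]
  · rw [Finset.prod_eq_one fun i hi => ?_, mul_one]
    rw [Finset.mem_singleton.mp (support_single_subset hi), Pi.single_eq_same, one_pow]
  · intro d hd hdn
    obtain ⟨i, hi, hij⟩ : ∃ i ∈ d.support, i ≠ j := by
      by_contra! hsub
      have hd_single : d = single j (d j) :=
        support_subset_singleton.mp fun i hi => Finset.mem_singleton.mpr (hsub i hi)
      have hdeg := h.degree_eq_of_coeff_ne_zero (mem_support_iff.mp hd)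
      rw [hd_single, degree_single] at hdeg
      exact hdn (hdeg ▸ hd_single)
    have hfactor : (Pi.single j 1 : σ → R) i ^ d i = 0 := by
      rw [Pi.single_eq_of_ne hij, zero_pow (Finsupp.mem_support_iff.mp hi)]
    rw [Finset.prod_eq_zero hi hfactor, mul_zero]
  · intro hn
    rw [notMem_support_iff.mp hn, zero_mul]

theorem aeval_restrict_monomial_mem_span [DecidableEq σ] (S : Finset σ) {m : σ →₀ ℕ}
    (hm : ∀ i, m i ≤ 1) (hdeg : m.degree = S.card) (a : R) :
    aeval (fun j => if j ∈ S then X j else 0) (monomial m a) ∈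
      R ∙ ∏ i ∈ S, (X i : MvPolynomial σ R) := by
  rw [aeval_monomial, Finsupp.prod, ← Algebra.smul_def]
  by_cases hsub : m.support ⊆ S
  · have hm_one : ∀ i ∈ m.support, m i = 1 := fun i hi =>
      le_antisymm (hm i) (Nat.one_le_iff_ne_zero.mpr (Finsupp.mem_support_iff.mp hi))
    have hsupp : m.support = S := by
      refine Finset.eq_of_subset_of_card_le hsub ?_
      rw [← hdeg, degree_apply, Finset.card_eq_sum_ones]
      exact (Finset.sum_congr rfl hm_one).le
    have hprod : ∏ i ∈ S, (if i ∈ S then X i else 0) ^ m i = ∏ i ∈ S, (X i : MvPolynomial σ R) :=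
      Finset.prod_congr rfl fun i hi => by rw [if_pos hi, hm_one i (hsupp ▸ hi), pow_one]
    rw [hsupp, hprod]
    exact Submodule.smul_mem _ a (Submodule.mem_span_singleton_self _)
  · obtain ⟨i, hi, hiS⟩ := Finset.not_subset.mp hsub
    rw [Finset.prod_eq_zero hi (by rw [if_neg hiS, zero_pow (Finsupp.mem_support_iff.mp hi)]),
      smul_zero]
    exact Submodule.zero_mem _

theorem IsHomogeneous.coeff_eq_zero_of_vanishesToOrder [DecidableEq σ] {Q : MvPolynomial σ ℂ}
    {r y : ℕ} (hQ : Q.IsHomogeneous r) {j : σ} (hv : VanishesToOrder Q (Pi.single j 1) y)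
    {m : σ →₀ ℕ} (hm : (m.erase j).degree < y) : coeff m Q = 0 := by
  by_contra hne
  have hdeg := (m.apply_add_degree_erase j).trans (hQ.degree_eq_of_coeff_ne_zero hne)
  set L := (m.erase j).toMultiset.toList
  have hlen : L.length = (m.erase j).degree := by
    rw [Multiset.length_toList, card_toMultiset, degree_apply, Finsupp.sum]
    rfl
  have heval := hv L (hlen ▸ hm)
  rw [(hQ.foldr_pderiv L).eval_piSingle_one] at heval
  obtain ⟨c, hc, hcoeff⟩ := coeff_foldr_pderiv L Q (single j (r - L.length))
  have hexp : single j (r - L.length) + Multiset.toFinsupp ↑L = m := by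
    rw [Multiset.coe_toList, toMultiset_toFinsupp, hlen, ← hdeg, Nat.add_sub_cancel,
      single_add_erase]
  rw [hcoeff, hexp] at heval
  exact mul_ne_zero hne (Nat.cast_ne_zero.mpr hc.ne') heval

theorem IsHomogeneous.le_one_of_coeff_ne_zero [DecidableEq σ] {Q : MvPolynomial σ ℂ} {r : ℕ}
    (hQ : Q.IsHomogeneous r) (hv : ∀ j, VanishesToOrder Q (Pi.single j 1) (r - 1))
    {m : σ →₀ ℕ} (hm : coeff m Q ≠ 0) (j : σ) : m j ≤ 1 := by
  by_contra! h
  have hdeg := (m.apply_add_degree_erase j).trans (hQ.degree_eq_of_coeff_ne_zero hm)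
  exact hm (hQ.coeff_eq_zero_of_vanishesToOrder (hv j) (by omega))

end MvPolynomial

open MvPolynomial in
theorem stmt7_general (N r : ℕ) (Q : MvPolynomial (Fin N) ℂ)
    (hQ : Q.IsHomogeneous r)
    (hv : ∀ j : Fin N, VanishesToOrder Q (Pi.single j 1) (r - 1))
    (S : Finset (Fin N)) (hS : S.card = r) :
    ∃ c : ℂ,
      MvPolynomial.aeval (fun j => if j ∈ S then MvPolynomial.X j else 0) Q =
        MvPolynomial.C c * ∏ i ∈ S, MvPolynomial.X i := by
  suffices h : aeval (fun j => if j ∈ S then X j else 0) Q ∈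
      ℂ ∙ ∏ i ∈ S, (X i : MvPolynomial (Fin N) ℂ) by
    obtain ⟨c, hc⟩ := Submodule.mem_span_singleton.mp h
    exact ⟨c, by rw [← hc, smul_eq_C_mul]⟩
  rw [Q.as_sum, map_sum]
  refine Submodule.sum_mem _ fun m hm => ?_
  have hcoeff := MvPolynomial.mem_support_iff.mp hm
  exact aeval_restrict_monomial_mem_span S (hQ.le_one_of_coeff_ne_zero hv hcoeff)
    (hS ▸ hQ.degree_eq_of_coeff_ne_zero hcoeff) _

/-- Let `r ≤ N` and let `Q` be a homogeneous polynomial of degree `r` in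
`x_1, …, x_N` over `ℂ` vanishing with multiplicity at least `r - 1` at every
standard basis vector.  Then for every subset `S ⊆ {1, …, N}` of cardinality `r`,
the polynomial obtained from `Q` by substituting `x_j = 0` for all `j ∉ S` is a
scalar multiple of the monomial `∏_{i ∈ S} x_i`. -/
theorem stmt7 (N r : ℕ) (hr : r ≤ N) (Q : MvPolynomial (Fin N) ℂ)
    (hQ : Q.IsHomogeneous r)
    (hv : ∀ j : Fin N, VanishesToOrder Q (Pi.single j 1) (r - 1))
    (S : Finset (Fin N)) (hS : S.card = r) :
    ∃ c : ℂ,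
      MvPolynomial.aeval (fun j => if j ∈ S then MvPolynomial.X j else 0) Q =
        MvPolynomial.C c * ∏ i ∈ S, MvPolynomial.X i :=
  stmt7_general N r Q hQ hv S hS
end

section
/- Let $n \ge 2$ and let $W \subset \mathbb{C}^{2n-1}$ be the set of $2n$ vectors consisting of the standard basis vectors $e_1,\dots,e_{2n-1}$ together with the all-ones vector $u=(1,\dots,1)$. Let $Q$ be a homogeneous polynomial of degree $n$ in $2n-1$ variables over $\mathbb{C}$ that vanishes with multiplicity at least $n-1$ at every point of $W$. Then for every subset $S \subseteq W$ of cardinality $n-1$, the polynomial $Q$ vanishes identically on the linear span of $S$. -/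
/-- The set `W ⊂ ℂ^(2n-1)` consisting of the `2n - 1` standard basis vectors together
with the all-ones vector. -/
def Wset (n : ℕ) : Set (Fin (2 * n - 1) → ℂ) :=
  {p | (∃ i, p = Pi.single i 1) ∨ p = fun _ => 1}

/-!
Parametrise `span S` by `c ↦ ∑ s, c s • s`. Pulling `Q` back along this linear map gives a form
`R` of degree `n` in the `n - 1` variables `c`; by the chain rule every derivative of `R` of order
`k` is a combination of derivatives of `Q` of order `k`, so `R` vanishes to order `n - 1` at each
basis vector `e_j`. A monomial `x^α` of degree `n` in fewer than `n` variables has an exponent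
`α j ≥ 2`. Differentiating `R` by `x^(α - α j • e_j)`, of order `n - α j ≤ n - 2`, and evaluating
at `e_j` picks out a nonzero multiple of the coefficient of `x^α`, so `R = 0`.
-/

theorem Multiset.degree_toFinsupp {σ : Type*} [DecidableEq σ] (s : Multiset σ) :
    s.toFinsupp.degree = Multiset.card s := by
  rw [Finsupp.degree_apply]
  exact Multiset.toFinsupp_sum_eq s

namespace MvPolynomial

variable {R σ τ : Type*} [CommSemiring R]

noncomputable def iterPDeriv (L : List σ) : Module.End R (MvPolynomial σ R) :=
  (L.map fun i => (pderiv i).toLinearMap).prod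

theorem iterPDeriv_nil (p : MvPolynomial σ R) : iterPDeriv [] p = p := rfl

theorem iterPDeriv_cons (i : σ) (L : List σ) (p : MvPolynomial σ R) :
    iterPDeriv (i :: L) p = pderiv i (iterPDeriv L p) := rfl

theorem iterPDeriv_append_singleton (L : List σ) (i : σ) (p : MvPolynomial σ R) :
    iterPDeriv (L ++ [i]) p = iterPDeriv L (pderiv i p) := by
  simp [iterPDeriv, List.prod_append]

theorem iterPDeriv_apply (L : List σ) (p : MvPolynomial σ R) :
    iterPDeriv L p = L.foldr (fun i q => pderiv i q) p := by
  induction L with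
  | nil => rfl
  | cons i L ih => rw [iterPDeriv_cons, ih, List.foldr_cons]

theorem exists_coeff_iterPDeriv [DecidableEq σ] (L : List σ) (m : σ →₀ ℕ)
    (p : MvPolynomial σ R) :
    ∃ c : ℕ, c ≠ 0 ∧ coeff m (iterPDeriv L p) = c * coeff (m + Multiset.toFinsupp L) p := by
  induction L generalizing m with
  | nil => exact ⟨1, one_ne_zero, by simp [iterPDeriv_nil]⟩
  | cons i L ih =>
    obtain ⟨c, hc, hcoeff⟩ := ih (m + Finsupp.single i 1)
    refine ⟨c * (m i + 1), by positivity, ?_⟩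
    have hL : Multiset.toFinsupp ↑(i :: L) = Finsupp.single i 1 + Multiset.toFinsupp ↑L := by
      rw [← Multiset.cons_coe, ← Multiset.singleton_add, Multiset.toFinsupp_add,
        Multiset.toFinsupp_singleton]
    rw [iterPDeriv_cons, coeff_pderiv, hcoeff, hL, add_assoc]
    push_cast
    ring

namespace IsHomogeneous

variable {p : MvPolynomial σ R} {n : ℕ}

theorem iterPDeriv [DecidableEq σ] (hp : p.IsHomogeneous n) (L : List σ) :
    (iterPDeriv L p).IsHomogeneous (n - L.length) := by
  intro m hm
  obtain ⟨c, -, hcoeff⟩ := exists_coeff_iterPDeriv L m p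
  have hdeg : (m + Multiset.toFinsupp L).degree = n := by
    by_contra h
    exact hm (by rw [hcoeff, hp.coeff_eq_zero h, mul_zero])
  rw [Pi.one_def, ← Finsupp.degree_eq_weight_one]
  rw [map_add, Multiset.degree_toFinsupp, Multiset.coe_card] at hdeg
  omega

theorem eval_single_one [DecidableEq σ] (hp : p.IsHomogeneous n) (j : σ) :
    eval (Pi.single j 1) p = coeff (Finsupp.single j n) p := by
  rw [eval_eq, Finset.sum_eq_single (Finsupp.single j n)]
  · rw [Finset.prod_eq_one, mul_one]
    intro i hi
    rw [Finset.mem_singleton.1 (Finsupp.support_single_subset hi), Pi.single_eq_same, one_pow]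
  · intro d hd hne
    have hdeg : d.degree = n := by
      by_contra h
      exact mem_support_iff.1 hd (hp.coeff_eq_zero h)
    obtain ⟨i, hi, hij⟩ : ∃ i ∈ d.support, i ≠ j := by
      by_contra! h
      have hsingle : d = Finsupp.single j (d j) :=
        Finsupp.support_subset_singleton.1 fun i hi => Finset.mem_singleton.2 (h i hi)
      rw [hsingle, Finsupp.degree_single] at hdeg
      exact hne (hsingle.trans (by rw [hdeg]))
    have hzero : (Pi.single j 1 : σ → R) i ^ d i = 0 := by
      rw [Pi.single_eq_of_ne hij, zero_pow (Finsupp.mem_support_iff.1 hi)]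
    rw [Finset.prod_eq_zero hi hzero, mul_zero]
  · intro h
    rw [notMem_support_iff.1 h, zero_mul]

end IsHomogeneous

theorem eval_aeval (c : τ → R) (g : σ → MvPolynomial τ R) (Q : MvPolynomial σ R) :
    eval c (aeval g Q) = eval (fun i => eval c (g i)) Q := by
  rw [aeval_eq_bind₁]
  exact eval₂Hom_bind₁ _ _ _ _

theorem pderiv_aeval [Fintype σ] (g : σ → MvPolynomial τ R) (j : τ) (Q : MvPolynomial σ R) :
    pderiv j (aeval g Q) = ∑ i, pderiv j (g i) * aeval g (pderiv i Q) := by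
  induction Q using MvPolynomial.induction_on with
  | C a => simp
  | add p q hp hq => simp only [map_add, hp, hq, mul_add, Finset.sum_add_distrib]
  | mul_X p i hp =>
    simp only [map_mul, aeval_X, pderiv_mul, hp, map_add, mul_add, Finset.sum_add_distrib,
      Finset.sum_mul]
    refine congrArg₂ (· + ·) (Finset.sum_congr rfl fun k _ => mul_assoc _ _ _) ?_
    rw [Finset.sum_eq_single i (fun k _ hk => by rw [pderiv_X_of_ne hk.symm, map_zero, mul_zero,
      mul_zero]) (absurd (Finset.mem_univ i)), pderiv_X_self, map_one, mul_one, mul_comm]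

section LinearCombination

variable [Fintype τ]

noncomputable def linearCombinationPoly (v : τ → σ → R) (i : σ) : MvPolynomial τ R :=
  ∑ j, C (v j i) * X j

theorem eval_linearCombinationPoly (v : τ → σ → R) (c : τ → R) :
    (fun i => eval c (linearCombinationPoly v i)) = ∑ j, c j • v j := by
  ext i
  simp [linearCombinationPoly, mul_comm]

theorem pderiv_linearCombinationPoly (v : τ → σ → R) (i : σ) (j : τ) :
    pderiv j (linearCombinationPoly v i) = C (v j i) := by
  classical
  simp [linearCombinationPoly, Pi.single_apply]

theorem isHomogeneous_linearCombinationPoly (v : τ → σ → R) (i : σ) :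
    (linearCombinationPoly v i).IsHomogeneous 1 :=
  IsHomogeneous.sum _ _ _ fun j _ => isHomogeneous_C_mul_X _ j

end LinearCombination

end MvPolynomial

open MvPolynomial

section VanishesToOrder

variable {σ : Type*} {Q : MvPolynomial σ ℂ} {p : σ → ℂ} {y : ℕ}

theorem vanishesToOrder_iff :
    VanishesToOrder Q p y ↔ ∀ L : List σ, L.length < y → eval p (iterPDeriv L Q) = 0 := by
  simp only [VanishesToOrder, iterPDeriv_apply]

theorem VanishesToOrder.pderiv (h : VanishesToOrder Q p (y + 1)) (i : σ) :
    VanishesToOrder (pderiv i Q) p y := by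
  rw [vanishesToOrder_iff] at h ⊢
  intro L hL
  rw [← iterPDeriv_append_singleton]
  exact h _ (by simpa using hL)

theorem VanishesToOrder.aeval_linearCombinationPoly {τ : Type*} [Fintype σ] [Fintype τ]
    {v : τ → σ → ℂ} {c : τ → ℂ} (hQ : VanishesToOrder Q (∑ j, c j • v j) y) :
    VanishesToOrder (aeval (linearCombinationPoly v) Q) c y := by
  induction y generalizing Q with
  | zero => exact fun L hL => absurd hL (Nat.not_lt_zero _)
  | succ y ih =>
    rw [vanishesToOrder_iff]
    intro L hL
    rcases L.eq_nil_or_concat' with rfl | ⟨L, j, rfl⟩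
    · rw [iterPDeriv_nil, eval_aeval, eval_linearCombinationPoly]
      exact hQ [] (Nat.succ_pos y)
    · rw [iterPDeriv_append_singleton, pderiv_aeval, map_sum, map_sum]
      refine Finset.sum_eq_zero fun i _ => ?_
      rw [pderiv_linearCombinationPoly, ← smul_eq_C_mul, map_smul, smul_eval,
        vanishesToOrder_iff.1 (ih (hQ.pderiv i)) L (by simpa using hL), mul_zero]

namespace MvPolynomial.IsHomogeneous

variable [DecidableEq σ] {n : ℕ}

theorem coeff_eq_zero_of_vanishesToOrder_single (hQ : Q.IsHomogeneous n) {j : σ}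
    (hv : VanishesToOrder Q (Pi.single j 1) y) {α : σ →₀ ℕ} (hα : n - α j < y) :
    coeff α Q = 0 := by
  by_cases hdeg : α.degree = n
  swap
  · exact hQ.coeff_eq_zero hdeg
  set L := (Finsupp.toMultiset (α.erase j)).toList
  have hL : Multiset.toFinsupp (L : Multiset σ) = α.erase j := by
    rw [Multiset.coe_toList, Finsupp.toMultiset_toFinsupp]
  have hlen : L.length = n - α j := by
    have := congrArg Finsupp.degree (Finsupp.single_add_erase j α)
    rw [map_add, Finsupp.degree_single, ← hL, Multiset.degree_toFinsupp,
      Multiset.coe_card] at this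
    omega
  obtain ⟨c, hc, hcoeff⟩ := exists_coeff_iterPDeriv L (Finsupp.single j (α j)) Q
  have hzero := vanishesToOrder_iff.1 hv L (hlen ▸ hα)
  rw [(hQ.iterPDeriv L).eval_single_one, hlen, Nat.sub_sub_self (hdeg ▸ Finsupp.le_degree j α),
    hcoeff, hL, Finsupp.single_add_erase] at hzero
  exact (mul_eq_zero.1 hzero).resolve_left (Nat.cast_ne_zero.2 hc)

theorem eq_zero_of_vanishesToOrder_single [Fintype σ] (hQ : Q.IsHomogeneous n)
    (hcard : Fintype.card σ < n) (hv : ∀ j, VanishesToOrder Q (Pi.single j 1) (n - 1)) :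
    Q = 0 := by
  ext α
  rw [coeff_zero]
  by_cases hdeg : α.degree = n
  swap
  · exact hQ.coeff_eq_zero hdeg
  obtain ⟨j, -, hj⟩ : ∃ j ∈ Finset.univ, 1 < α j := by
    refine Finset.exists_lt_of_sum_lt ?_
    simpa [← Finsupp.degree_eq_sum, hdeg] using hcard
  have := hdeg ▸ Finsupp.le_degree j α
  exact hQ.coeff_eq_zero_of_vanishesToOrder_single (hv j) (by omega)

end MvPolynomial.IsHomogeneous

end VanishesToOrder

/-- Let `n ≥ 2` and let `W ⊂ ℂ^(2n-1)` consist of the standard basis vectors together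
with the all-ones vector (`2n` vectors).  If a homogeneous polynomial `Q` of degree
`n` in `2n - 1` variables vanishes with multiplicity at least `n - 1` at every point
of `W`, then for every subset `S ⊆ W` of cardinality `n - 1`, the polynomial `Q`
vanishes identically on the linear span of `S`. -/
theorem stmt8 (n : ℕ) (hn : 2 ≤ n)
    (Q : MvPolynomial (Fin (2 * n - 1)) ℂ) (hQ : Q.IsHomogeneous n)
    (hv : ∀ p ∈ Wset n, VanishesToOrder Q p (n - 1))
    (S : Finset (Fin (2 * n - 1) → ℂ)) (hSW : ↑S ⊆ Wset n)
    (hS : S.card = n - 1) :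
    ∀ p ∈ Submodule.span ℂ (S : Set (Fin (2 * n - 1) → ℂ)),
      MvPolynomial.eval p Q = 0 := by
  classical
  intro p hp
  let v : S → Fin (2 * n - 1) → ℂ := Subtype.val
  obtain ⟨c, rfl⟩ := (Submodule.mem_span_range_iff_exists_fun ℂ).1
    (show p ∈ Submodule.span ℂ (Set.range v) by rwa [Subtype.range_coe])
  have hR : (aeval (linearCombinationPoly v) Q).IsHomogeneous n := by
    simpa using hQ.aeval _ (isHomogeneous_linearCombinationPoly v)
  have hRv : ∀ s, VanishesToOrder (aeval (linearCombinationPoly v) Q) (Pi.single s 1) (n - 1) :=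
    fun s => VanishesToOrder.aeval_linearCombinationPoly
      (by simpa [Pi.single_apply] using hv s (hSW s.2))
  have hR0 : aeval (linearCombinationPoly v) Q = 0 :=
    hR.eq_zero_of_vanishesToOrder_single (by simp [hS]; omega) hRv
  rw [← eval_linearCombinationPoly, ← eval_aeval, hR0, map_zero]
end
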